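/- (In classical logic.) Let f be a function from the point set of a natural space 𝒱 to the point set of a basic neighborhood space 𝒲 that is continuous with respect to the natural topologies and respects ≡ (x ≡ y implies f(x) ≡ f(y)). Then there is a natural morphism g from 𝒱 to 𝒲 such that f(x) ≡ g(x) for all points x of 𝒱. -/

import Mathlib

/-! # Natural Topology: basic framework (Waaldijk) -/

/-- A pre-natural space: a countable set of basic dots with a decidable
pre-apartness `apart` and a decidable refinement partial order `refines`. -/
structure PreNaturalSpace (V : Type) : Type where
  countable' : Countable V
  apart : V → V → Prop
  refines : V → V → Prop
  apart_dec : DecidableRel apart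
  refines_dec : DecidableRel refines
  apart_symm : ∀ a b, apart a b → apart b a
  apart_irrefl : ∀ a, ¬ apart a a
  apart_mono : ∀ a b c, refines a b → apart c b → apart c a
  refines_refl : ∀ a, refines a a
  refines_trans : ∀ a b c, refines a b → refines b c → refines a c
  refines_antisymm : ∀ a b, refines a b → refines b a → a = b

namespace PreNaturalSpace

variable {V W : Type}

/-- `a ≺ b` : strict refinement. -/
def strict (P : PreNaturalSpace V) (a b : V) : Prop := P.refines a b ∧ a ≠ b

/-- A point is a shrinking sequence of dots deciding every apart pair of dots. -/
structure IsPoint (P : PreNaturalSpace V) (p : ℕ → V) : Prop where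
  mono : ∀ n, P.refines (p (n + 1)) (p n)
  shrink : ∀ n, ∃ m, P.strict (p m) (p n)
  decides : ∀ a b, P.apart a b → ∃ m, P.apart (p m) a ∨ P.apart (p m) b

/-- The set of points of a pre-natural space. -/
def Pt (P : PreNaturalSpace V) : Type := { p : ℕ → V // P.IsPoint p }

/-- `p` begins with the dot `a` : some `p m ≺ a`. -/
def begins (P : PreNaturalSpace V) (p : ℕ → V) (a : V) : Prop := ∃ m, P.strict (p m) a

/-- Apartness between a dot and a point. -/
def dApart (P : PreNaturalSpace V) (a : V) (p : ℕ → V) : Prop := ∃ m, P.apart (p m) a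

/-- Apartness between points. -/
def pApart (P : PreNaturalSpace V) (p q : P.Pt) : Prop := ∃ n, P.apart (p.1 n) (q.1 n)

/-- Equivalence of points: the negation of apartness. -/
def pEquiv (P : PreNaturalSpace V) (p q : P.Pt) : Prop := ¬ P.pApart p q

variable (P : PreNaturalSpace V)

lemma refines_of_le {p : ℕ → V} (hp : ∀ n, P.refines (p (n + 1)) (p n)) :
    ∀ {m k : ℕ}, m ≤ k → P.refines (p k) (p m) := by
  intro m k h
  induction h with
  | refl => exact P.refines_refl _
  | step h ih => exact P.refines_trans _ _ _ (hp _) ih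

lemma begins_mono {z : ℕ → V} (hz : P.IsPoint z) {a b : V} (hab : P.refines a b)
    (h : P.begins z a) : P.begins z b := by
  obtain ⟨j, hj1, hj2⟩ := h
  have hzb : P.refines (z j) b := P.refines_trans _ _ _ hj1 hab
  by_cases he : z j = b
  · obtain ⟨i, hi1, hi2⟩ := hz.shrink j
    exact ⟨i, P.refines_trans _ _ _ hi1 hzb, fun h' => hi2 (h'.trans he.symm)⟩
  · exact ⟨j, hzb, he⟩

/-- The natural (apartness) topology as a predicate on subsets of the point set. -/
def NatOpen (U : Set P.Pt) : Prop :=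
  ∀ x ∈ U, ∀ y : P.Pt, P.pApart y x ∨ ∃ m, { z : P.Pt | P.begins z.1 (y.1 m) } ⊆ U

instance instTopPt : TopologicalSpace P.Pt where
  IsOpen := P.NatOpen
  isOpen_univ := fun _ _ _ => Or.inr ⟨0, fun _ _ => trivial⟩
  isOpen_inter := by
    intro U U' hU hU' x hx y
    rcases hU x hx.1 y with h | ⟨m, hm⟩
    · exact Or.inl h
    rcases hU' x hx.2 y with h | ⟨k, hk⟩
    · exact Or.inl h
    refine Or.inr ⟨max m k, fun z hz => ⟨hm ?_, hk ?_⟩⟩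
    · exact P.begins_mono z.2 (P.refines_of_le y.2.mono (le_max_left m k)) hz
    · exact P.begins_mono z.2 (P.refines_of_le y.2.mono (le_max_right m k)) hz
  isOpen_sUnion := by
    intro S hS x hx y
    obtain ⟨U, hU, hxU⟩ := hx
    rcases hS U hU x hxU y with h | ⟨m, hm⟩
    · exact Or.inl h
    · exact Or.inr ⟨m, fun z hz => ⟨U, hU, hm hz⟩⟩

lemma pEquiv_refl (p : P.Pt) : P.pEquiv p p := fun ⟨_, h⟩ => P.apart_irrefl _ h

lemma pEquiv_symm {p q : P.Pt} (h : P.pEquiv p q) : P.pEquiv q p :=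
  fun ⟨n, hn⟩ => h ⟨n, P.apart_symm _ _ hn⟩

lemma pEquiv_trans {p q r : P.Pt} (hpq : P.pEquiv p q) (hqr : P.pEquiv q r) :
    P.pEquiv p r := by
  rintro ⟨n, hn⟩
  obtain ⟨m, hm⟩ := q.2.decides (p.1 n) (r.1 n) hn
  rcases hm with hm | hm
  · -- q.1 m apart from p.1 n
    refine hpq ⟨max m n, ?_⟩
    have h1 : P.apart (p.1 n) (q.1 (max m n)) :=
      P.apart_mono _ _ _ (P.refines_of_le q.2.mono (le_max_left m n)) (P.apart_symm _ _ hm)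
    have h2 : P.apart (q.1 (max m n)) (p.1 (max m n)) :=
      P.apart_mono _ _ _ (P.refines_of_le p.2.mono (le_max_right m n)) (P.apart_symm _ _ h1)
    exact P.apart_symm _ _ h2
  · refine hqr ⟨max m n, ?_⟩
    have h1 : P.apart (r.1 n) (q.1 (max m n)) :=
      P.apart_mono _ _ _ (P.refines_of_le q.2.mono (le_max_left m n)) (P.apart_symm _ _ hm)
    exact P.apart_mono _ _ _ (P.refines_of_le r.2.mono (le_max_right m n))
      (P.apart_symm _ _ h1)

/-- The setoid of points modulo `≡`. -/
def ptSetoid : Setoid P.Pt :=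
  ⟨P.pEquiv, ⟨P.pEquiv_refl, P.pEquiv_symm, P.pEquiv_trans⟩⟩

/-- `â` : the set of points beginning with the dot `a`. -/
def hatSet (a : V) : Set P.Pt := { p | P.begins p.1 a }

/-- `ā` : the `≡`-closure of `â`. -/
def barSet (a : V) : Set P.Pt := { p | ∃ q : P.Pt, P.begins q.1 a ∧ P.pEquiv p q }

/-- A natural space is basic-open when every `ā` is open. -/
def BasicOpen : Prop := ∀ a : V, IsOpen (P.barSet a)

/-- Existence of a maximal dot. -/
def HasMaxDot : Prop := ∃ m, ∀ a, P.refines a m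

/-- Every basic dot begins at least one point. -/
def AllDotsInhabited : Prop := ∀ a : V, ∃ p : ℕ → V, P.IsPoint p ∧ P.begins p a

/-- The conditions making the point set of a pre-natural space a natural space. -/
def IsNaturalSpace : Prop := P.HasMaxDot ∧ P.AllDotsInhabited

end PreNaturalSpace

/-- A refinement morphism between (pre-)natural spaces: a map on dots sending
points to points and reflecting apartness of points. -/
structure RefMorphism {V W : Type} (P : PreNaturalSpace V) (Q : PreNaturalSpace W) : Type where
  toFun : V → W
  maps_points : ∀ p : ℕ → V, P.IsPoint p → Q.IsPoint (fun n => toFun (p n))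
  reflects_apart : ∀ p q : ℕ → V, P.IsPoint p → P.IsPoint q →
    (∃ n, Q.apart (toFun (p n)) (toFun (q n))) → ∃ n, P.apart (p n) (q n)

/-- The induced map on points of a refinement morphism. -/
def RefMorphism.pointMap {V W : Type} {P : PreNaturalSpace V} {Q : PreNaturalSpace W}
    (f : RefMorphism P Q) (p : P.Pt) : Q.Pt :=
  ⟨fun n => f.toFun (p.1 n), f.maps_points p.1 p.2⟩

namespace PreNaturalSpace

variable {V W : Type} (P : PreNaturalSpace V)

/-- Restriction of a pre-natural space to a subset of dots. -/
noncomputable def restrict (S : Set V) : PreNaturalSpace S where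
  countable' := by haveI := P.countable'; exact inferInstance
  apart a b := P.apart a.1 b.1
  refines a b := P.refines a.1 b.1
  apart_dec := Classical.decRel _
  refines_dec := Classical.decRel _
  apart_symm _ _ h := P.apart_symm _ _ h
  apart_irrefl a := P.apart_irrefl a.1
  apart_mono _ _ _ h1 h2 := P.apart_mono _ _ _ h1 h2
  refines_refl a := P.refines_refl a.1
  refines_trans _ _ _ h1 h2 := P.refines_trans _ _ _ h1 h2
  refines_antisymm _ _ h1 h2 := Subtype.ext (P.refines_antisymm _ _ h1 h2)

/-! ## Trail spaces -/

/-- A `≺`-trail: a finite strictly refining sequence `a₀ ≻ a₁ ≻ …`. -/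
def Trail : Type := { l : List V // l.Chain' fun a b => P.strict b a }

lemma strict_trans_flip : Transitive (fun a b : V => P.strict b a) := by
  rintro a b c ⟨h1, h1'⟩ ⟨h2, h2'⟩
  refine ⟨P.refines_trans _ _ _ h2 h1, fun he => ?_⟩
  exact h2' (P.refines_antisymm _ _ h2 (he ▸ h1))

lemma last_refines_of_prefix {a b : List V}
    (ha : a.Chain' fun x y => P.strict y x) (hpre : b <+: a)
    {x y : V} (hx : x ∈ a.getLast?) (hy : y ∈ b.getLast?) :
    P.refines x y := by
  haveI : IsTrans V (fun x y : V => P.strict y x) := ⟨fun _ _ _ h1 h2 => P.strict_trans_flip h1 h2⟩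
  have hpw : a.Pairwise fun x y => P.strict y x := List.isChain_iff_pairwise.mp ha
  obtain ⟨t, rfl⟩ := hpre
  rcases eq_or_ne t [] with rfl | ht
  · rw [List.append_nil] at hx
    have : x = y := by
      rw [Option.mem_def] at hx hy
      exact Option.some_injective _ (hx ▸ hy ▸ rfl)
    exact this ▸ P.refines_refl x
  · rw [List.getLast?_append_of_ne_nil _ ht] at hx
    have hxt : x ∈ t := List.mem_of_mem_getLast? hx
    have hyb : y ∈ b := List.mem_of_mem_getLast? hy
    have := (List.pairwise_append.mp hpw).2.2 y hyb x hxt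
    exact this.1

/-- The trail space of a pre-natural space: dots are `≺`-trails, with
`a ⊑* b` iff `b` is an initial segment of `a`, and `a #* b` iff the last
dots of `a` and `b` are apart. -/
noncomputable def trailSpace : PreNaturalSpace P.Trail where
  countable' := by haveI := P.countable'; exact inferInstanceAs (Countable
    { l : List V // l.Chain' fun a b => P.strict b a })
  apart a b := ∃ x ∈ a.1.getLast?, ∃ y ∈ b.1.getLast?, P.apart x y
  refines a b := b.1 <+: a.1
  apart_dec := Classical.decRel _
  refines_dec := Classical.decRel _
  apart_symm := by
    rintro a b ⟨x, hx, y, hy, hxy⟩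
    exact ⟨y, hy, x, hx, P.apart_symm _ _ hxy⟩
  apart_irrefl := by
    rintro a ⟨x, hx, y, hy, hxy⟩
    rw [Option.mem_def] at hx hy
    have : x = y := Option.some_injective _ (hx ▸ hy ▸ rfl)
    exact P.apart_irrefl x (this ▸ hxy)
  apart_mono := by
    rintro a b c hab ⟨x, hx, y, hy, hxy⟩
    have hbne : b.1 ≠ [] := by
      intro h
      rw [h] at hy
      simp at hy
    have hane : a.1 ≠ [] := by
      intro h
      exact hbne (List.prefix_nil.mp (h ▸ hab))
    obtain ⟨z, hz⟩ : ∃ z, z ∈ a.1.getLast? := by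
      rcases h : a.1.getLast? with _ | z
      · exact absurd (List.getLast?_eq_none_iff.mp h) hane
      · exact ⟨z, rfl⟩
    have hzy : P.refines z y := P.last_refines_of_prefix a.2 hab hz hy
    exact ⟨x, hx, z, hz, P.apart_mono _ _ _ hzy hxy⟩
  refines_refl a := List.prefix_refl a.1
  refines_trans _ _ _ h1 h2 := h2.trans h1
  refines_antisymm a b h1 h2 :=
    Subtype.ext (h2.eq_of_length (le_antisymm h2.length_le h1.length_le))

end PreNaturalSpace

open Classical in
/-- `p♯(n)` : the `≺`-trail obtained from `p₀, …, p_{n-1}` by deleting repetitions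
(for a shrinking sequence `p`, repetitions are consecutive). -/
noncomputable def segList {V : Type} (p : ℕ → V) : ℕ → List V
  | 0 => []
  | n + 1 =>
    if (segList p n).getLast? = some (p n) then segList p n
    else segList p n ++ [p n]

namespace PreNaturalSpace

variable {V W : Type} (P : PreNaturalSpace V)

/-- The map on trail dots sending a nonempty trail to its last element and
the empty trail to `m`. -/
def lastDot (m : V) (q : P.Trail) : V := q.1.getLast?.getD m

/-- `g` is the point map induced by a trail morphism `f` (a refinement morphism
on the trail space): `g p = f (p♯(0)), f (p♯(1)), …`. -/
def InducedByTrailMorphism (Q : PreNaturalSpace W) (f : RefMorphism P.trailSpace Q)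
    (g : P.Pt → Q.Pt) : Prop :=
  ∀ p : P.Pt, ∃ t : P.trailSpace.Pt, (∀ n, (t.1 n).1 = segList p.1 n) ∧ g p = f.pointMap t

/-- `g` is a natural morphism map: induced by a refinement morphism or by a trail morphism. -/
def IsNaturalMorphismMap (Q : PreNaturalSpace W) (g : P.Pt → Q.Pt) : Prop :=
  (∃ f : RefMorphism P Q, ∀ p, g p = f.pointMap p) ∨
  (∃ f : RefMorphism P.trailSpace Q, P.InducedByTrailMorphism Q f g)

/-- Two natural spaces are isomorphic: natural morphisms both ways, inverse up to `≡`. -/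
def AreIsomorphic (Q : PreNaturalSpace W) : Prop :=
  ∃ (f : P.Pt → Q.Pt) (g : Q.Pt → P.Pt),
    P.IsNaturalMorphismMap Q f ∧ Q.IsNaturalMorphismMap P g ∧
    (∀ x, P.pEquiv (g (f x)) x) ∧ (∀ y, Q.pEquiv (f (g y)) y)

/-- A natural space is a basic neighborhood space iff it is isomorphic to a basic-open space. -/
def IsBasicNbhdSpace : Prop :=
  ∃ (W' : Type) (Q : PreNaturalSpace W'), Q.IsNaturalSpace ∧ Q.BasicOpen ∧ P.AreIsomorphic Q

/-! ## Trees, treas, spreads, spraids, fans -/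

/-- `a` is a successor of `c`. -/
def IsSucc (a c : V) : Prop := P.strict a c ∧ ∀ b, P.strict a b → P.refines b c → b = c

/-- A successor-trail (as a list, each entry a successor of the previous one). -/
def SuccChain (l : List V) : Prop := l.Chain' fun x y => P.IsSucc y x

/-- A successor-trail from `m` to `a`. -/
def IsSuccTrailFromTo (m a : V) (l : List V) : Prop :=
  P.SuccChain l ∧ l.head? = some m ∧ l.getLast? = some a

/-- `(V,⊑)` is a tree. -/
def IsTree : Prop :=
  ∃ m, (∀ a, P.refines a m) ∧ ∀ a, ∃! l : List V, P.IsSuccTrailFromTo m a l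

/-- `(V,⊑)` is a trea. -/
def IsTrea : Prop :=
  ∃ m, (∀ a, P.refines a m) ∧ (∀ a, { b | P.refines a b }.Finite) ∧
    ∀ a, ∃ g : ℕ, ∀ l : List V, P.IsSuccTrailFromTo m a l → l.length = g

/-- Every infinite successor-trail is a point. -/
def SuccTrailsArePoints : Prop :=
  ∀ q : ℕ → V, (∀ n, P.IsSucc (q (n + 1)) (q n)) → P.IsPoint q

def IsSpread : Prop := P.IsTree ∧ P.SuccTrailsArePoints

def IsSpraid : Prop := P.IsTrea ∧ P.SuccTrailsArePoints

/-- Finitely branching: every dot has finitely many successors. -/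
def FinBranching : Prop := ∀ a : V, { b | P.IsSucc b a }.Finite

def IsFan : Prop := P.IsSpread ∧ P.FinBranching

def IsFann : Prop := P.IsSpraid ∧ P.FinBranching

end PreNaturalSpace

/-!
Compose `f` with the isomorphism `φ` onto a basic-open space `𝒲'` and read a point `x` through
its trail `x♯`. Along the trail, build a `≺`-trail of `𝒲'` greedily: at a new dot `α`, refine the
current dot `c` to some `b ≺ c` such that every point beginning with `α` is sent into `b̄`, and such
that `b` decides the first pairs of a fixed enumeration of `#`. Every dot produced has `φ (f x)`
in its `≡`-closure, so the produced point is `≡ φ (f x)`. The construction never stalls: pick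
`b` on a point `≡ φ (f x)` beginning with `c`; `b̄` is open (`𝒲'` is basic-open and natural
morphisms are continuous), so all points beginning with a late enough dot of `x` land in `b̄`.
Finally, `ψ` applied to the sequence of last dots of a trail point of `𝒲'` agrees up to `≡` with
a refinement morphism on the trail space of `𝒲'`; composing it with the construction gives the
required trail morphism.
-/

open Filter

namespace PreNaturalSpace

variable {V W : Type} (P : PreNaturalSpace V)

instance : Trans P.pEquiv P.pEquiv P.pEquiv := ⟨P.pEquiv_trans⟩

lemma strict_of_refines_of_strict {a b c : V} (hab : P.refines a b) (hbc : P.strict b c) :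
    P.strict a c :=
  ⟨P.refines_trans _ _ _ hab hbc.1, fun h => hbc.2 (P.refines_antisymm _ _ hbc.1 (h ▸ hab))⟩

lemma strict_of_strict_of_refines {a b c : V} (hab : P.strict a b) (hbc : P.refines b c) :
    P.strict a c :=
  ⟨P.refines_trans _ _ _ hab.1 hbc, fun h => hab.2 (P.refines_antisymm _ _ hab.1 (h ▸ hbc))⟩

lemma not_apart_of_refines_of_refines {a b c : V} (hca : P.refines c a) (hcb : P.refines c b) :
    ¬ P.apart a b := fun h =>
  P.apart_irrefl c
    (P.apart_mono _ _ _ hcb (P.apart_symm _ _ (P.apart_mono _ _ _ hca (P.apart_symm _ _ h))))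

lemma not_apart_of_refines {a b : V} (h : P.refines a b) : ¬ P.apart a b :=
  P.not_apart_of_refines_of_refines (P.refines_refl a) h

namespace IsPoint

variable {P} {p q : ℕ → V} (hp : P.IsPoint p)
include hp

lemma refines_of_le {m k : ℕ} (h : m ≤ k) : P.refines (p k) (p m) := P.refines_of_le hp.mono h

lemma lt_of_strict {n k : ℕ} (h : P.strict (p k) (p n)) : n < k := by
  by_contra! hkn
  exact h.2 (P.refines_antisymm _ _ h.1 (hp.refines_of_le hkn))

lemma apart_of_le {c : V} {m k : ℕ} (h : P.apart (p m) c) (hmk : m ≤ k) : P.apart (p k) c :=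
  P.apart_symm _ _ (P.apart_mono _ _ _ (hp.refines_of_le hmk) (P.apart_symm _ _ h))

lemma eventually_apart_or {c d : V} (hcd : P.apart c d) :
    ∀ᶠ k in atTop, P.apart (p k) c ∨ P.apart (p k) d := by
  obtain ⟨m, hm⟩ := hp.decides c d hcd
  filter_upwards [eventually_ge_atTop m] with k hk
  exact hm.imp (hp.apart_of_le · hk) (hp.apart_of_le · hk)

lemma eventually_apart {n : ℕ} (hq : P.IsPoint q) (h : P.apart (p n) (q n)) :
    ∀ᶠ k in atTop, P.apart (p k) (q k) := by
  filter_upwards [eventually_ge_atTop n] with k hk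
  exact hp.apart_of_le (P.apart_symm _ _ (hq.apart_of_le (P.apart_symm _ _ h) hk)) hk

end IsPoint

lemma pApart_of_apart {p q : P.Pt} {i j : ℕ} (h : P.apart (p.1 i) (q.1 j)) : P.pApart p q := by
  refine ⟨max i j, p.2.apart_of_le (P.apart_symm _ _ ?_) (le_max_left i j)⟩
  exact q.2.apart_of_le (P.apart_symm _ _ h) (le_max_right i j)

variable {P} in
lemma pApart.of_pEquiv {p q p' q' : P.Pt} (h : P.pApart p q) (hp : P.pEquiv p p')
    (hq : P.pEquiv q q') : P.pApart p' q' := by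
  by_contra h'
  exact (P.pEquiv_trans hp (P.pEquiv_trans h' (P.pEquiv_symm hq))) h

lemma pEquiv_of_forall_exists_refines {p q : P.Pt}
    (h : ∀ n, ∃ c, P.refines c (p.1 n) ∧ P.refines c (q.1 n)) : P.pEquiv p q := by
  rintro ⟨n, hn⟩
  obtain ⟨c, hcp, hcq⟩ := h n
  exact P.not_apart_of_refines_of_refines hcp hcq hn

lemma pEquiv_of_forall_mem_barSet {p q : P.Pt} (h : ∀ n, q ∈ P.barSet (p.1 n)) :
    P.pEquiv p q := by
  rintro ⟨n, hn⟩
  obtain ⟨y, ⟨k, hk⟩, hqy⟩ := h n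
  exact hqy (P.pApart_of_apart (P.apart_mono _ _ _ hk.1 (P.apart_symm _ _ hn)))

lemma mem_barSet_of_forall_refines {m : V} (hm : ∀ a, P.refines a m) (p : P.Pt) :
    p ∈ P.barSet m := by
  obtain ⟨k, hk⟩ := p.2.shrink 0
  exact ⟨p, ⟨k, P.strict_of_strict_of_refines hk (hm _)⟩, P.pEquiv_refl p⟩

lemma mem_of_isOpen_of_pEquiv {U : Set P.Pt} (hU : IsOpen U) {p q : P.Pt} (hp : p ∈ U)
    (h : P.pEquiv q p) : q ∈ U := by
  rcases hU p hp q with hqp | ⟨m, hm⟩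
  · exact absurd hqp h
  · exact hm (q.2.shrink m)

end PreNaturalSpace

lemma Nat.exists_le_of_forall_exists_lt {f : ℕ → ℕ} (h : ∀ n, ∃ k, f n < f k) (L : ℕ) :
    ∃ n, L ≤ f n := by
  induction L with
  | zero => exact ⟨0, Nat.zero_le _⟩
  | succ L ih =>
    obtain ⟨n, hn⟩ := ih
    obtain ⟨k, hk⟩ := h n
    exact ⟨k, by omega⟩

lemma segList_congr {V : Type} {p q : ℕ → V} {n : ℕ} (h : ∀ i < n, p i = q i) :
    segList p n = segList q n := by
  induction n with
  | zero => rfl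
  | succ n ih =>
    rw [segList, segList, ih fun i hi => h i (Nat.lt_succ_of_lt hi), h n (Nat.lt_succ_self n)]

lemma segList_getLast? {V : Type} (p : ℕ → V) (n : ℕ) :
    (segList p (n + 1)).getLast? = some (p n) := by
  rw [segList]
  split
  · assumption
  · exact List.getLast?_concat

lemma segList_prefix_succ {V : Type} (p : ℕ → V) (n : ℕ) :
    segList p n <+: segList p (n + 1) := by
  rw [segList]
  split
  · exact List.prefix_refl _
  · exact List.prefix_append _ _

lemma segList_prefix_of_le {V : Type} (p : ℕ → V) {n k : ℕ} (h : n ≤ k) :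
    segList p n <+: segList p k := by
  induction h with
  | refl => exact List.prefix_refl _
  | step _ ih => exact ih.trans (segList_prefix_succ _ _)

namespace PreNaturalSpace

variable {V W : Type} (P : PreNaturalSpace V)

lemma segList_isChain {p : ℕ → V} (hp : ∀ n, P.refines (p (n + 1)) (p n)) (n : ℕ) :
    (segList p n).IsChain fun a b => P.strict b a := by
  induction n with
  | zero => exact List.isChain_nil
  | succ n ih =>
    rw [segList]
    split_ifs with hlast
    · exact ih
    refine ih.append (List.isChain_singleton _) fun x hx y hy => ?_
    obtain rfl : y = p n := by simpa using hy.symm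
    cases n with
    | zero => simp [segList] at hx
    | succ k =>
      obtain rfl : x = p k := by simpa [segList_getLast?] using hx.symm
      exact ⟨hp k, fun h => hlast (by rw [segList_getLast?, h])⟩

lemma isPoint_segList (p : P.Pt) :
    P.trailSpace.IsPoint fun n => ⟨segList p.1 n, P.segList_isChain p.2.mono n⟩ where
  mono n := segList_prefix_succ p.1 n
  shrink n := by
    obtain ⟨k, hk⟩ := p.2.shrink n
    refine ⟨k + 1, segList_prefix_of_le _ (by have := p.2.lt_of_strict hk; omega), fun h => ?_⟩
    have hlast := congrArg (fun a : P.Trail => a.1.getLast?) h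
    simp only [segList_getLast?] at hlast
    cases n with
    | zero => simp [segList] at hlast
    | succ n =>
      rw [segList_getLast?, Option.some_inj] at hlast
      exact (P.strict_of_strict_of_refines hk (p.2.mono n)).2 hlast
  decides := by
    rintro a b ⟨x, hx, y, hy, hxy⟩
    obtain ⟨k, hk⟩ := p.2.decides x y hxy
    exact ⟨k + 1, hk.imp (fun h => ⟨p.1 k, segList_getLast? p.1 k, x, hx, h⟩)
      (fun h => ⟨p.1 k, segList_getLast? p.1 k, y, hy, h⟩)⟩

/-- The trail point `p♯`. -/
noncomputable def segListPt (p : P.Pt) : P.trailSpace.Pt :=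
  ⟨fun n => ⟨segList p.1 n, P.segList_isChain p.2.mono n⟩, P.isPoint_segList p⟩

lemma eq_segListPt {p : P.Pt} {t : P.trailSpace.Pt} (h : ∀ n, (t.1 n).1 = segList p.1 n) :
    t = P.segListPt p :=
  Subtype.ext (funext fun n => Subtype.ext (h n))

lemma inducedByTrailMorphism_iff {Q : PreNaturalSpace W} {f : RefMorphism P.trailSpace Q}
    {g : P.Pt → Q.Pt} :
    P.InducedByTrailMorphism Q f g ↔ ∀ p, g p = f.pointMap (P.segListPt p) := by
  refine ⟨fun h p => ?_, fun h p => ⟨P.segListPt p, fun _ => rfl, h p⟩⟩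
  obtain ⟨t, ht, hg⟩ := h p
  rw [hg, P.eq_segListPt ht]

lemma Trail.pairwise {P : PreNaturalSpace V} (a : P.Trail) :
    a.1.Pairwise fun x y => P.strict y x :=
  have : Trans (fun x y => P.strict y x) (fun x y => P.strict y x) (fun x y => P.strict y x) :=
    ⟨fun h1 h2 => P.strict_trans_flip h1 h2⟩
  List.isChain_iff_pairwise.mp a.2

namespace IsPoint

variable {P} {t : ℕ → P.Trail} (ht : P.trailSpace.IsPoint t)
include ht

lemma prefix_of_le {n k : ℕ} (h : n ≤ k) : (t n).1 <+: (t k).1 := ht.refines_of_le h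

lemma exists_length_lt (n : ℕ) : ∃ k, n ≤ k ∧ (t n).1.length < (t k).1.length := by
  obtain ⟨k, hk⟩ := ht.shrink n
  refine ⟨k, (ht.lt_of_strict hk).le, hk.1.length_le.lt_of_ne fun h => hk.2 ?_⟩
  exact Subtype.ext (hk.1.eq_of_length h).symm

lemma eventually_le_length (L : ℕ) : ∀ᶠ n in atTop, L ≤ (t n).1.length := by
  obtain ⟨n, hn⟩ := Nat.exists_le_of_forall_exists_lt
    (fun n => (ht.exists_length_lt n).imp fun _ => And.right) L
  filter_upwards [eventually_ge_atTop n] with k hk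
  exact hn.trans (ht.prefix_of_le hk).length_le

end IsPoint

section LastDot

variable {P} {m : V}

lemma lastDot_eq_of_mem {x : V} {a : P.Trail} (h : x ∈ a.1.getLast?) : P.lastDot m a = x := by
  rw [lastDot, Option.mem_def.mp h, Option.getD_some]

lemma lastDot_mem {a : P.Trail} (h : a.1 ≠ []) : P.lastDot m a ∈ a.1.getLast? := by
  rw [lastDot, List.getLast?_eq_some_getLast h]
  rfl

lemma lastDot_of_eq_nil {a : P.Trail} (h : a.1 = []) : P.lastDot m a = m := by
  rw [lastDot, h]
  rfl

lemma apart_lastDot_of_trailSpace_apart {a b : P.Trail} (h : P.trailSpace.apart a b) :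
    P.apart (P.lastDot m a) (P.lastDot m b) := by
  obtain ⟨x, hx, y, hy, hxy⟩ := h
  rwa [lastDot_eq_of_mem hx, lastDot_eq_of_mem hy]

lemma lastDot_refines (hm : ∀ a, P.refines a m) {a b : P.Trail} (h : P.trailSpace.refines a b) :
    P.refines (P.lastDot m a) (P.lastDot m b) := by
  by_cases hb : b.1 = []
  · rw [lastDot_of_eq_nil hb]
    exact hm _
  have ha : a.1 ≠ [] := fun ha => hb (List.prefix_nil.mp (ha ▸ h))
  exact P.last_refines_of_prefix a.2 h (lastDot_mem ha) (lastDot_mem hb)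

lemma lastDot_strict {a b : P.Trail} (hb : b.1 ≠ []) (h : P.trailSpace.strict a b) :
    P.strict (P.lastDot m a) (P.lastDot m b) := by
  obtain ⟨⟨u, hu⟩, hab⟩ := h
  have hu' : u ≠ [] := by
    rintro rfl
    exact hab (Subtype.ext (by simpa using hu.symm))
  have hmem : P.lastDot m a ∈ u := by
    have := lastDot_mem (m := m) (fun ha => hu' (List.append_eq_nil_iff.mp (hu.trans ha)).2)
    rw [← hu, List.getLast?_append_of_ne_nil _ hu'] at this
    exact List.mem_of_mem_getLast? this
  have hpair := a.pairwise
  rw [← hu] at hpair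
  exact (List.pairwise_append.mp hpair).2.2 _ (List.mem_of_mem_getLast? (lastDot_mem hb)) _ hmem

variable {t s : ℕ → P.Trail}

lemma isPoint_lastDot (hm : ∀ a, P.refines a m) (ht : P.trailSpace.IsPoint t) :
    P.IsPoint fun n => P.lastDot m (t n) where
  mono n := lastDot_refines hm (ht.mono n)
  shrink n := by
    obtain ⟨k, hnk, hk⟩ := ((eventually_ge_atTop n).and (ht.eventually_le_length 1)).exists
    obtain ⟨j, hj⟩ := ht.shrink k
    refine ⟨j, P.strict_of_strict_of_refines (lastDot_strict ?_ hj) (lastDot_refines hm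
      (ht.prefix_of_le hnk))⟩
    exact List.length_pos_iff.mp hk
  decides a b hab := by
    obtain ⟨k, hk⟩ := ht.decides ⟨[a], List.isChain_singleton a⟩
      ⟨[b], List.isChain_singleton b⟩ ⟨a, rfl, b, rfl, hab⟩
    exact ⟨k, hk.imp apart_lastDot_of_trailSpace_apart apart_lastDot_of_trailSpace_apart⟩

lemma exists_trailSpace_apart_of_apart_lastDot (hm : ∀ a, P.refines a m)
    (ht : P.trailSpace.IsPoint t) (hs : P.trailSpace.IsPoint s)
    (h : ∃ n, P.apart (P.lastDot m (t n)) (P.lastDot m (s n))) :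
    ∃ n, P.trailSpace.apart (t n) (s n) := by
  obtain ⟨n, hn⟩ := h
  obtain ⟨k, hk, hkt, hks⟩ := (((isPoint_lastDot hm ht).eventually_apart (isPoint_lastDot hm hs)
    hn).and ((ht.eventually_le_length 1).and (hs.eventually_le_length 1))).exists
  exact ⟨k, _, lastDot_mem (List.length_pos_iff.mp hkt), _,
    lastDot_mem (List.length_pos_iff.mp hks), hk⟩

lemma IsPoint.exists_prefix_append_singleton (ht : P.trailSpace.IsPoint t)
    (hm : ∀ a, P.refines a m) (n k : ℕ) :
    ∃ n' a α, n ≤ n' ∧ (t n).1 <+: a ∧ a ++ [α] <+: (t n').1 ∧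
      P.refines α (P.lastDot m (t k)) := by
  set J := max (t n).1.length (t k).1.length
  obtain ⟨n', hn', hlen⟩ :=
    ((eventually_ge_atTop (max n k)).and (ht.eventually_le_length (J + 1))).exists
  have htake := List.take_concat_get' (t n').1 J (by omega)
  let c : P.Trail := ⟨(t n').1.take (J + 1), (t n').2.prefix (List.take_prefix _ _)⟩
  have hkc : P.trailSpace.refines c (t k) :=
    List.prefix_take_iff.mpr ⟨ht.prefix_of_le (le_of_max_le_right hn'), by omega⟩
  refine ⟨n', _, _, le_of_max_le_left hn',
    List.prefix_take_iff.mpr ⟨ht.prefix_of_le (le_of_max_le_left hn'), le_max_left _ _⟩,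
    htake ▸ List.take_prefix _ _, ?_⟩
  have hcα : P.lastDot m c = (t n').1[J] := lastDot_eq_of_mem (by
    change _ ∈ ((t n').1.take (J + 1)).getLast?
    rw [← htake, List.getLast?_concat]
    rfl)
  exact hcα ▸ lastDot_refines hm hkc

variable (P) in
def lastDotMorphism (hm : ∀ a, P.refines a m) : RefMorphism P.trailSpace P where
  toFun := P.lastDot m
  maps_points _ ht := isPoint_lastDot hm ht
  reflects_apart _ _ ht hs := exists_trailSpace_apart_of_apart_lastDot hm ht hs

lemma refines_lastDot_segListPt (hm : ∀ a, P.refines a m) (p : P.Pt) (n : ℕ) :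
    P.refines (p.1 n) (P.lastDot m ((P.segListPt p).1 n)) := by
  cases n with
  | zero => exact hm _
  | succ n =>
    rw [lastDot_eq_of_mem (segList_getLast? p.1 n)]
    exact p.2.mono n

lemma lastDot_segListPt_pEquiv (hm : ∀ a, P.refines a m) (p : P.Pt) :
    P.pEquiv ((P.lastDotMorphism hm).pointMap (P.segListPt p)) p :=
  P.pEquiv_of_forall_exists_refines fun n =>
    ⟨p.1 n, refines_lastDot_segListPt hm p n, P.refines_refl _⟩

lemma segListPt_lastDot_pEquiv (hm : ∀ a, P.refines a m) (s : P.trailSpace.Pt) :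
    P.trailSpace.pEquiv s (P.segListPt ((P.lastDotMorphism hm).pointMap s)) := by
  rintro ⟨n, hn⟩
  exact P.not_apart_of_refines
    (refines_lastDot_segListPt hm ((P.lastDotMorphism hm).pointMap s) n)
    (apart_lastDot_of_trailSpace_apart (m := m) hn)

end LastDot

end PreNaturalSpace

namespace RefMorphism

variable {V W X : Type} {P : PreNaturalSpace V} {Q : PreNaturalSpace W} {R : PreNaturalSpace X}

def comp (g : RefMorphism Q R) (f : RefMorphism P Q) : RefMorphism P R where
  toFun := g.toFun ∘ f.toFun
  maps_points p hp := g.maps_points _ (f.maps_points p hp)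
  reflects_apart p q hp hq h :=
    f.reflects_apart p q hp hq (g.reflects_apart _ _ (f.maps_points p hp) (f.maps_points q hq) h)

lemma pointMap_pEquiv (f : RefMorphism P Q) {p q : P.Pt} (h : P.pEquiv p q) :
    Q.pEquiv (f.pointMap p) (f.pointMap q) :=
  fun hpq => h (f.reflects_apart p.1 q.1 p.2 q.2 hpq)

end RefMorphism

namespace PreNaturalSpace

variable {V W : Type} (P : PreNaturalSpace V)

lemma segListPt_pEquiv {p q : P.Pt} (h : P.pEquiv p q) :
    P.trailSpace.pEquiv (P.segListPt p) (P.segListPt q) := by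
  rintro ⟨_ | n, x, hx, y, hy, hxy⟩
  · cases hx
  · change x ∈ (segList p.1 (n + 1)).getLast? at hx
    change y ∈ (segList q.1 (n + 1)).getLast? at hy
    rw [segList_getLast?, Option.mem_some_iff] at hx hy
    subst hx hy
    exact h (P.pApart_of_apart hxy)

def splice (y z : ℕ → V) (n j : ℕ) (i : ℕ) : V := if i ≤ n then y i else z (i + j)

section Splice

variable {P} {y z : ℕ → V} {n j : ℕ}

lemma splice_of_le {i : ℕ} (h : i ≤ n) : splice y z n j i = y i := if_pos h

lemma splice_of_lt {i : ℕ} (h : n < i) : splice y z n j i = z (i + j) := if_neg (by omega)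

variable (hy : P.IsPoint y) (hz : P.IsPoint z) (hzy : P.refines (z j) (y n))
include hy hz hzy

lemma refines_splice (i : ℕ) : P.refines (z (i + j)) (splice y z n j i) := by
  rcases le_or_gt i n with h | h
  · rw [splice_of_le h]
    exact P.refines_trans _ _ _ (hz.refines_of_le (by omega))
      (P.refines_trans _ _ _ hzy (hy.refines_of_le h))
  · rw [splice_of_lt h]
    exact P.refines_refl _

lemma isPoint_splice : P.IsPoint (splice y z n j) where
  mono i := by
    rcases lt_or_ge i n with h | h
    · rw [splice_of_le h, splice_of_le h.le]
      exact hy.mono i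
    · rw [splice_of_lt (by omega : n < i + 1)]
      exact P.refines_trans _ _ _ (hz.refines_of_le (by omega)) (refines_splice hy hz hzy i)
  shrink i := by
    obtain ⟨k, hk⟩ := hz.shrink (i + j)
    refine ⟨k + n + 1, ?_⟩
    rw [splice_of_lt (by omega)]
    exact P.strict_of_refines_of_strict (hz.refines_of_le (by omega))
      (P.strict_of_strict_of_refines hk (refines_splice hy hz hzy i))
  decides a b hab := by
    obtain ⟨k, hk⟩ := hz.decides a b hab
    refine ⟨k + n + 1, ?_⟩
    rw [splice_of_lt (by omega)]
    exact hk.imp (hz.apart_of_le · (by omega)) (hz.apart_of_le · (by omega))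

lemma splice_pEquiv : P.pEquiv ⟨splice y z n j, isPoint_splice hy hz hzy⟩ ⟨z, hz⟩ :=
  P.pEquiv_of_forall_exists_refines fun i =>
    ⟨z (i + j), refines_splice hy hz hzy i, hz.refines_of_le (by omega)⟩

end Splice

namespace IsNaturalMorphismMap

variable {P} {Q : PreNaturalSpace W} {g : P.Pt → Q.Pt} (hg : P.IsNaturalMorphismMap Q g)
include hg

lemma map_pEquiv {x y : P.Pt} (h : P.pEquiv x y) : Q.pEquiv (g x) (g y) := by
  rcases hg with ⟨f, hf⟩ | ⟨f, hf⟩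
  · rw [hf, hf]
    exact f.pointMap_pEquiv h
  · rw [P.inducedByTrailMorphism_iff] at hf
    rw [hf, hf]
    exact f.pointMap_pEquiv (P.segListPt_pEquiv h)

lemma pApart_of_pApart {x y : P.Pt} (h : Q.pApart (g x) (g y)) : P.pApart x y := by
  by_contra hxy
  exact hg.map_pEquiv hxy h

lemma apply_eq_of_forall_le {x y : P.Pt} {n : ℕ} (h : ∀ i ≤ n, x.1 i = y.1 i) :
    (g x).1 n = (g y).1 n := by
  rcases hg with ⟨f, hf⟩ | ⟨f, hf⟩
  · rw [hf, hf]
    exact congrArg f.toFun (h n le_rfl)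
  · rw [P.inducedByTrailMorphism_iff] at hf
    rw [hf, hf]
    exact congrArg f.toFun (Subtype.ext (segList_congr fun i hi => h i hi.le))

lemma continuous : Continuous g := by
  refine ⟨fun U hU x hx y => ?_⟩
  rcases hU (g x) hx (g y) with hap | ⟨n, hn⟩
  · exact Or.inl (hg.pApart_of_pApart hap)
  refine Or.inr ⟨n, fun z ⟨j, hj⟩ => ?_⟩
  -- `z` is `≡` to a splice `u` of `y` and `z` that agrees with `y` up to `n`
  let u : P.Pt := ⟨splice y.1 z.1 n j, isPoint_splice y.2 z.2 hj.1⟩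
  have hu : g u ∈ U := by
    refine hn (?_ : Q.begins (g u).1 ((g y).1 n))
    rw [← hg.apply_eq_of_forall_le (x := u) fun i hi => splice_of_le hi]
    exact (g u).2.shrink n
  exact Q.mem_of_isOpen_of_pEquiv hU hu
    (hg.map_pEquiv (P.pEquiv_symm (splice_pEquiv y.2 z.2 hj.1)))

lemma exists_trailSpace_refMorphism {m : V} (hm : ∀ a, P.refines a m) :
    ∃ H : RefMorphism P.trailSpace Q,
      ∀ s, Q.pEquiv (H.pointMap s) (g ((P.lastDotMorphism hm).pointMap s)) := by
  rcases hg with ⟨f, hf⟩ | ⟨f, hf⟩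
  · exact ⟨f.comp (P.lastDotMorphism hm), fun s => hf _ ▸ Q.pEquiv_refl _⟩
  · rw [P.inducedByTrailMorphism_iff] at hf
    exact ⟨f, fun s => hf _ ▸ f.pointMap_pEquiv (P.segListPt_lastDot_pEquiv hm s)⟩

end IsNaturalMorphismMap

variable {P} {Q : PreNaturalSpace W}

variable (Q) in
def DecidesUpTo (E : ℕ → W × W) (k : ℕ) (b : W) : Prop :=
  ∀ j < k, Q.apart (E j).1 (E j).2 → Q.apart b (E j).1 ∨ Q.apart b (E j).2

lemma IsPoint.eventually_decidesUpTo {q : ℕ → W} (hq : Q.IsPoint q) (E : ℕ → W × W)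
    (k : ℕ) : ∀ᶠ M in atTop, Q.DecidesUpTo E k (q M) := by
  refine (eventually_all_finite (Set.finite_Iio k)).2 fun j _ => ?_
  by_cases h : Q.apart (E j).1 (E j).2
  · exact (hq.eventually_apart_or h).mono fun _ hM _ => hM
  · exact Eventually.of_forall fun _ h' => absurd h' h

section Approx

variable (F : P.Pt → Q.Pt) (m : W) (E : ℕ → W × W)

def ApproxCond (L : List W) (α : V) (b : W) : Prop :=
  Q.strict b (L.getLast?.getD m) ∧ (∀ z : P.Pt, P.begins z.1 α → F z ∈ Q.barSet b) ∧
    Q.DecidesUpTo E L.length b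

open Classical in
noncomputable def approxStep (L : List W) (α : V) : List W :=
  if h : ∃ b, ApproxCond F m E L α b then L ++ [h.choose] else L

noncomputable def approxState (a : List V) : List W := a.foldl (approxStep F m E) []

variable {F m E} {mP : V} {t : ℕ → P.Trail}

lemma approxState_append_singleton (a : List V) (α : V) :
    approxState F m E (a ++ [α]) = approxStep F m E (approxState F m E a) α :=
  List.foldl_concat _ _ _ _

lemma prefix_approxStep (L : List W) (α : V) : L <+: approxStep F m E L α := by
  unfold approxStep
  split_ifs
  exacts [List.prefix_append _ _, List.prefix_refl _]

lemma length_approxStep {L : List W} {α : V} {b : W} (h : ApproxCond F m E L α b) :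
    (approxStep F m E L α).length = L.length + 1 := by
  rw [approxStep, dif_pos ⟨b, h⟩, List.length_append, List.length_singleton]

lemma approxState_prefix {a b : List V} (h : a <+: b) :
    approxState F m E a <+: approxState F m E b := by
  obtain ⟨u, rfl⟩ := h
  rw [approxState, approxState, List.foldl_append]
  generalize List.foldl (approxStep F m E) [] a = L
  induction u generalizing L with
  | nil => exact List.prefix_refl _
  | cons α u ih => exact (prefix_approxStep L α).trans (ih _)

lemma approxState_isChain (a : List V) :
    (approxState F m E a).IsChain fun x y => Q.strict y x := by
  induction a using List.reverseRecOn with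
  | nil => exact List.isChain_nil
  | append_singleton a α ih =>
    rw [approxState_append_singleton, approxStep]
    split_ifs with h
    · refine ih.append (List.isChain_singleton _) fun x hx y hy => ?_
      obtain rfl : y = h.choose := by simpa using hy.symm
      simpa [Option.mem_def.mp hx] using h.choose_spec.1
    · exact ih

lemma approxState_decidesUpTo (a : List V) :
    Q.DecidesUpTo E ((approxState F m E a).length - 1)
      ((approxState F m E a).getLast?.getD m) := by
  induction a using List.reverseRecOn with
  | nil => exact fun j hj => absurd hj (Nat.not_lt_zero _)
  | append_singleton a α ih =>
    rw [approxState_append_singleton, approxStep]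
    split_ifs with h
    · simpa using h.choose_spec.2.2
    · exact ih

lemma approxState_mem_barSet (hm : ∀ b, Q.refines b m) (a : List V)
    (ha : a.IsChain fun x y => P.strict y x) (z : P.Pt)
    (hz : ∀ α ∈ a.getLast?, P.begins z.1 α) :
    F z ∈ Q.barSet ((approxState F m E a).getLast?.getD m) := by
  induction a using List.reverseRecOn with
  | nil => exact Q.mem_barSet_of_forall_refines hm (F z)
  | append_singleton a α ih =>
    have hzα : P.begins z.1 α := hz α List.getLast?_concat
    rw [approxState_append_singleton, approxStep]
    split_ifs with h
    · rw [List.getLast?_concat, Option.getD_some]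
      exact h.choose_spec.2.1 z hzα
    · refine ih ha.left_of_append fun β hβ => P.begins_mono z.2 ?_ hzα
      exact (List.isChain_append.mp ha).2.2 β hβ α rfl |>.1

lemma exists_approxCond (hF : ∀ b, IsOpen (F ⁻¹' Q.barSet b)) {x : P.Pt} {L : List W}
    (hx : F x ∈ Q.barSet (L.getLast?.getD m)) :
    ∃ k b, ∀ α, P.refines α (x.1 k) → ApproxCond F m E L α b := by
  obtain ⟨y, ⟨k, hk⟩, hxy⟩ := hx
  obtain ⟨M, hMk, hM⟩ :=
    ((eventually_ge_atTop k).and (y.2.eventually_decidesUpTo E L.length)).exists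
  rcases hF (y.1 M) x ⟨y, y.2.shrink M, hxy⟩ x with hxx | ⟨k₀, hk₀⟩
  · exact absurd hxx (P.pEquiv_refl x)
  exact ⟨k₀, y.1 M, fun α hα => ⟨Q.strict_of_refines_of_strict (y.2.refines_of_le hMk) hk,
    fun z hz => hk₀ (P.begins_mono z.2 hα hz), hM⟩⟩

lemma approxState_mem_barSet_lastDot (hm : ∀ b, Q.refines b m) (hmP : ∀ a, P.refines a mP)
    (ht : P.trailSpace.IsPoint t) (n : ℕ) :
    F ((P.lastDotMorphism hmP).pointMap ⟨t, ht⟩) ∈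
      Q.barSet ((approxState F m E (t n).1).getLast?.getD m) :=
  approxState_mem_barSet hm _ (t n).2 _ fun _ hα =>
    lastDot_eq_of_mem (m := mP) hα ▸ ((P.lastDotMorphism hmP).pointMap ⟨t, ht⟩).2.shrink n

lemma approxState_grows (hm : ∀ b, Q.refines b m) (hmP : ∀ a, P.refines a mP)
    (hF : ∀ b, IsOpen (F ⁻¹' Q.barSet b)) (ht : P.trailSpace.IsPoint t) (n : ℕ) :
    ∃ n', n ≤ n' ∧
      (approxState F m E (t n).1).length < (approxState F m E (t n').1).length := by
  by_contra! hstuck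
  -- a later dot `α` of the point coded by `t` admits a refinement, so the state cannot be stuck
  obtain ⟨k, b, hb⟩ :=
    exists_approxCond (E := E) hF (approxState_mem_barSet_lastDot hm hmP ht n)
  obtain ⟨n', a, α, hnn', hna, haα, hα⟩ := ht.exists_prefix_append_singleton hmP n k
  have hfrozen : ∀ c, (t n).1 <+: c → c <+: (t n').1 →
      approxState F m E c = approxState F m E (t n).1 := fun c h₁ h₂ =>
    ((approxState_prefix h₁).eq_of_length (le_antisymm (approxState_prefix h₁).length_le
      ((approxState_prefix h₂).length_le.trans (hstuck n' hnn')))).symm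
  have hstep := hfrozen _ (hna.trans (List.prefix_append _ _)) haα
  rw [approxState_append_singleton, hfrozen a hna ((List.prefix_append _ _).trans haα)] at hstep
  have hgrow := length_approxStep (hb α hα)
  rw [hstep] at hgrow
  omega

variable (F m E) in
noncomputable def approxTrail (a : P.Trail) : Q.Trail :=
  ⟨approxState F m E a.1, approxState_isChain a.1⟩

variable (hm : ∀ b, Q.refines b m) (hmP : ∀ a, P.refines a mP)
  (hF : ∀ b, IsOpen (F ⁻¹' Q.barSet b))
include hm hmP hF

lemma isPoint_approxTrail (hE : Function.Surjective E) (ht : P.trailSpace.IsPoint t) :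
    Q.trailSpace.IsPoint fun n => approxTrail F m E (t n) where
  mono n := approxState_prefix (ht.mono n)
  shrink n := by
    obtain ⟨n', hnn', hlt⟩ := approxState_grows hm hmP hF ht n
    exact ⟨n', approxState_prefix (ht.prefix_of_le hnn'),
      fun h => hlt.ne (congrArg (fun a : Q.Trail => a.1.length) h).symm⟩
  decides := by
    rintro a b ⟨x, hx, y, hy, hxy⟩
    obtain ⟨j, hj⟩ := hE (x, y)
    obtain ⟨n, hn⟩ := Nat.exists_le_of_forall_exists_lt
      (fun n => (approxState_grows (E := E) hm hmP hF ht n).imp fun _ => And.right) (j + 2)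
    have hne : approxState F m E (t n).1 ≠ [] := List.ne_nil_of_length_pos (by omega)
    have hdec := approxState_decidesUpTo (F := F) (m := m) (E := E) (t n).1 j (by omega)
    rw [hj] at hdec
    exact ⟨n, (hdec hxy).imp (fun h => ⟨_, lastDot_mem hne, x, hx, h⟩)
      (fun h => ⟨_, lastDot_mem hne, y, hy, h⟩)⟩

lemma approxTrail_pEquiv (hE : Function.Surjective E) (ht : P.trailSpace.IsPoint t) :
    Q.pEquiv ((Q.lastDotMorphism hm).pointMap ⟨_, isPoint_approxTrail hm hmP hF hE ht⟩)
      (F ((P.lastDotMorphism hmP).pointMap ⟨t, ht⟩)) :=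
  Q.pEquiv_of_forall_mem_barSet fun n => approxState_mem_barSet_lastDot hm hmP ht n

variable (F) in
lemma exists_trailSpace_lift (hFresp : ∀ x y, P.pEquiv x y → Q.pEquiv (F x) (F y)) :
    ∃ A : RefMorphism P.trailSpace Q.trailSpace, ∀ t,
      Q.pEquiv ((Q.lastDotMorphism hm).pointMap (A.pointMap t))
        (F ((P.lastDotMorphism hmP).pointMap t)) := by
  have := Q.countable'
  have : Nonempty (W × W) := ⟨(m, m)⟩
  obtain ⟨E, hE⟩ := exists_surjective_nat (W × W)
  refine ⟨⟨approxTrail F m E, fun t ht => isPoint_approxTrail hm hmP hF hE ht,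
    fun t s ht hs ⟨n, hn⟩ => ?_⟩, fun t => approxTrail_pEquiv hm hmP hF hE t.2⟩
  refine (P.lastDotMorphism hmP).reflects_apart t s ht hs (by_contra fun hts => ?_)
  have hA : Q.pApart ((Q.lastDotMorphism hm).pointMap ⟨_, isPoint_approxTrail hm hmP hF hE ht⟩)
      ((Q.lastDotMorphism hm).pointMap ⟨_, isPoint_approxTrail hm hmP hF hE hs⟩) :=
    ⟨n, apart_lastDot_of_trailSpace_apart hn⟩
  exact hFresp ((P.lastDotMorphism hmP).pointMap ⟨t, ht⟩)
    ((P.lastDotMorphism hmP).pointMap ⟨s, hs⟩) hts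
    (hA.of_pEquiv (approxTrail_pEquiv hm hmP hF hE ht) (approxTrail_pEquiv hm hmP hF hE hs))

end Approx

end PreNaturalSpace

theorem stmt6_general {V W : Type} (P : PreNaturalSpace V) (Q : PreNaturalSpace W)
    (hP : P.IsNaturalSpace) (hbn : Q.IsBasicNbhdSpace)
    (f : P.Pt → Q.Pt) (hf : Continuous f)
    (hresp : ∀ x y, P.pEquiv x y → Q.pEquiv (f x) (f y)) :
    ∃ g : P.Pt → Q.Pt, P.IsNaturalMorphismMap Q g ∧ ∀ x, Q.pEquiv (f x) (g x) := by
  obtain ⟨mP, hmP⟩ := hP.1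
  obtain ⟨W', Q', ⟨⟨m, hm⟩, -⟩, hQ'open, φ, ψ, hφ, hψ, hψφ, -⟩ := hbn
  obtain ⟨A, hA⟩ := PreNaturalSpace.exists_trailSpace_lift (φ ∘ f) hm hmP
    (fun b => (hQ'open b).preimage (hφ.continuous.comp hf))
    (fun x y h => hφ.map_pEquiv (hresp x y h))
  obtain ⟨H, hH⟩ := hψ.exists_trailSpace_refMorphism hm
  refine ⟨fun x => (H.comp A).pointMap (P.segListPt x),
    Or.inr ⟨H.comp A, P.inducedByTrailMorphism_iff.mpr fun _ => rfl⟩, fun x => ?_⟩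
  let t := P.segListPt x
  calc Q.pEquiv (f x) (ψ (φ (f x))) := Q.pEquiv_symm (hψφ (f x))
    Q.pEquiv _ (ψ (φ (f ((P.lastDotMorphism hmP).pointMap t)))) :=
      hψ.map_pEquiv (hφ.map_pEquiv (hresp _ _ (P.pEquiv_symm (P.lastDot_segListPt_pEquiv hmP x))))
    Q.pEquiv _ (ψ ((Q'.lastDotMorphism hm).pointMap (A.pointMap t))) :=
      hψ.map_pEquiv (Q'.pEquiv_symm (hA t))
    Q.pEquiv _ (H.pointMap (A.pointMap t)) := Q.pEquiv_symm (hH _)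

/-- classical: a continuous `≡`-respecting map from a natural space to
a basic neighborhood space is represented by a natural morphism, up to `≡`. -/
theorem stmt6 {V W : Type} (P : PreNaturalSpace V) (Q : PreNaturalSpace W)
    (hP : P.IsNaturalSpace) (hQ : Q.IsNaturalSpace) (hbn : Q.IsBasicNbhdSpace)
    (f : P.Pt → Q.Pt) (hf : Continuous f)
    (hresp : ∀ x y, P.pEquiv x y → Q.pEquiv (f x) (f y)) :
    ∃ g : P.Pt → Q.Pt, P.IsNaturalMorphismMap Q g ∧ ∀ x, Q.pEquiv (f x) (g x) :=
  stmt6_general P Q hP hbn f hf hresp
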